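/- Let N be a finite set, v : Finset N → ℝ with interactions I(S) = Σ_{T ⊆ S} (−1)^{|S|−|T|} · v(T), and fix i ∈ N. Define the masked set function v' : Finset N → ℝ by v'(T) = v(T ∖ {i}), i.e., the output when variable i is always masked, and let I' be its interactions. Then I'(S) = 0 for every S containing i, and I'(S) = I(S) for every S ⊆ N ∖ {i}. In particular, masking any word in a concept S removes that concept's interaction effect. -/

import Mathlib

open Finset

/-
Adding a variable `i` to `s` turns the interaction into that of the discrete derivative
`T ↦ v (insert i T) - v T` on `s`. A set function that ignores `i` has zero derivative in `i`,
hence no interaction involving `i`; on sets avoiding `i` it coincides with `v`, and an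
interaction only sees the values on subsets.
-/

/-- The interaction effect (Harsanyi dividend) of a subset `S`:
`I(S) = ∑_{T ⊆ S} (-1)^(|S|-|T|) ⬝ v(T)`. -/
noncomputable def interaction {N : Type*} [DecidableEq N]
    (v : Finset N → ℝ) (S : Finset N) : ℝ :=
  ∑ T ∈ S.powerset, (-1 : ℝ) ^ (S.card - T.card) * v T

section

variable {N : Type*} [DecidableEq N]

theorem interaction_congr {v w : Finset N → ℝ} {S : Finset N} (h : ∀ T ⊆ S, v T = w T) :
    interaction v S = interaction w S :=
  sum_congr rfl fun T hT => by rw [h T (mem_powerset.1 hT)]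

theorem interaction_insert (v : Finset N → ℝ) {i : N} {s : Finset N} (hi : i ∉ s) :
    interaction v (insert i s) = interaction (fun T => v (insert i T) - v T) s := by
  unfold interaction
  rw [sum_powerset_insert hi, ← sum_add_distrib]
  refine sum_congr rfl fun T hT => ?_
  have hTs : T ⊆ s := mem_powerset.1 hT
  have hiT : i ∉ T := fun h => hi (hTs h)
  have hcard : #(insert i s) - #T = (#s - #T) + 1 := by
    rw [card_insert_of_notMem hi]; have := card_le_card hTs; omega
  rw [hcard, card_insert_of_notMem hi, card_insert_of_notMem hiT, Nat.add_sub_add_right,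
    pow_succ]
  ring

theorem interaction_eq_zero_of_insert_eq {v : Finset N → ℝ} {i : N}
    (hv : ∀ T, v (insert i T) = v T) {S : Finset N} (hi : i ∈ S) : interaction v S = 0 := by
  rw [← insert_erase hi, interaction_insert v (notMem_erase i S)]
  simp only [hv, sub_self, interaction, mul_zero, sum_const_zero]

end

/-- **Masking removes interactions (AND semantics).** Let `v'(T) = v(T \ {i})`
be the output when variable `i` is always masked. Then every interaction of
`v'` containing `i` vanishes, and interactions of `v'` among subsets not
containing `i` agree with those of `v`. -/
theorem interaction_masked_variable {N : Type*} [DecidableEq N]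
    (v : Finset N → ℝ) (i : N)
    (v' : Finset N → ℝ) (hv' : ∀ T : Finset N, v' T = v (T.erase i)) :
    (∀ S : Finset N, i ∈ S → interaction v' S = 0) ∧
    (∀ S : Finset N, i ∉ S → interaction v' S = interaction v S) := by
  refine ⟨fun S hi => interaction_eq_zero_of_insert_eq (fun T => ?_) hi,
    fun S hi => interaction_congr fun T hT => ?_⟩
  · rw [hv', hv', erase_insert_eq_erase]
  · rw [hv', erase_eq_of_notMem fun h => hi (hT h)]
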